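/- arXiv:2508.12034 — 4 statements merged into one kernel-verified Lean document; each statement's English description precedes it below -/
import Mathlib

section
/- For integers r ≥ 2 and n ≥ r, the number of edges of Y_r(n) satisfies e(Y_r(n)) ≥ (1 − 1/r)·n²/2 − n/r − r/8 + 1. -/
open SimpleGraph

noncomputable section

/-- The generalized book graph `B_{r,k} = K_r ∨ kK₁`: every vertex of a complete graph
on `r` vertices is joined to every vertex of an independent set of size `k`. -/
def genBook (r k : ℕ) : SimpleGraph (Fin r ⊕ Fin k) where
  Adj x y := x ≠ y ∧ (x.isLeft = true ∨ y.isLeft = true)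
  symm := ⟨fun x y h => ⟨h.1.symm, h.2.symm⟩⟩
  loopless := ⟨fun x h => h.1 rfl⟩

/-- `G` contains no subgraph isomorphic to `H` (i.e. `G` is `H`-free). -/
def IsHFree {α β : Type*} (H : SimpleGraph α) (G : SimpleGraph β) : Prop :=
  ¬ ∃ f : α ↪ β, ∀ a b, H.Adj a b → G.Adj (f a) (f b)

open Classical in
/-- The real adjacency matrix of a graph on `Fin n`. -/
def adjMat {n : ℕ} (G : SimpleGraph (Fin n)) : Matrix (Fin n) (Fin n) ℝ :=
  Matrix.of fun i j => if G.Adj i j then (1 : ℝ) else 0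

/-- The spectral radius of `G`: the largest eigenvalue of its adjacency matrix. -/
def specRad {n : ℕ} (G : SimpleGraph (Fin n)) : ℝ :=
  sSup {t : ℝ | ∃ x : Fin n → ℝ, x ≠ 0 ∧ (adjMat G).mulVec x = t • x}

/-- The number of edges of `G`. -/
def edgeCount {n : ℕ} (G : SimpleGraph (Fin n)) : ℕ := G.edgeSet.ncard

/-- The number of edges of `G` with both endpoints in `S`. -/
def edgesIn {n : ℕ} (G : SimpleGraph (Fin n)) (S : Set (Fin n)) : ℕ :=
  {e ∈ G.edgeSet | ∀ v ∈ e, v ∈ S}.ncard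

/-- Given a partition of the vertices into `r` parts (encoded by `P : Fin n → Fin r`),
the number `Σ_{1 ≤ i < j ≤ r} e(V_i, V_j)` of crossing edges: each crossing edge is
counted once, ordered so that the part index increases. -/
def crossPairs {n r : ℕ} (G : SimpleGraph (Fin n)) (P : Fin n → Fin r) : ℕ :=
  {p : Fin n × Fin n | G.Adj p.1 p.2 ∧ P p.1 < P p.2}.ncard

/-- `P` maximizes the number of crossing edges among all partitions into `r` parts. -/
def MaxCrossPartition {n r : ℕ} (G : SimpleGraph (Fin n)) (P : Fin n → Fin r) : Prop :=
  ∀ Q : Fin n → Fin r, crossPairs G Q ≤ crossPairs G P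

/-- Degree of `v` in `G`. -/
def deg {n : ℕ} (G : SimpleGraph (Fin n)) (v : Fin n) : ℕ := (G.neighborSet v).ncard

/-- Number of neighbours of `v` inside `S`. -/
def degIn {n : ℕ} (G : SimpleGraph (Fin n)) (v : Fin n) (S : Set (Fin n)) : ℕ :=
  (G.neighborSet v ∩ S).ncard

/-- The graph `Y_r(n)`: obtained from the Turán graph `T_r(n)` (parts = residue classes
mod `r`, with `T₁` the class of `r-1`, of size `⌊n/r⌋`, and `T₂` the class of `0`, of size
`⌈n/r⌉`) by adding the edge between `u = 0` and `w = r` inside `T₂`, deleting the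
`⌊n/r⌋ - 1` edges between `u` and `T₁ \ {r-1}` and the edge between `w` and `r-1`,
so that `u` and `w` have no common neighbour in `T₁`. -/
def yGraph (r n : ℕ) : SimpleGraph (Fin n) :=
  SimpleGraph.fromRel (fun a b =>
    ((a : ℕ) % r ≠ (b : ℕ) % r
      ∧ ¬ ((a : ℕ) = 0 ∧ (b : ℕ) % r = r - 1 ∧ (b : ℕ) ≠ r - 1)
      ∧ ¬ ((b : ℕ) = 0 ∧ (a : ℕ) % r = r - 1 ∧ (a : ℕ) ≠ r - 1)
      ∧ ¬ ((a : ℕ) = r ∧ (b : ℕ) = r - 1)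
      ∧ ¬ ((b : ℕ) = r ∧ (a : ℕ) = r - 1))
    ∨ ((a : ℕ) = 0 ∧ (b : ℕ) = r) ∨ ((a : ℕ) = r ∧ (b : ℕ) = 0))

/-- `G` attains the maximum spectral radius among all non-`r`-partite `B_{r,k}`-free
graphs of order `n`. -/
def IsExtremal (r k n : ℕ) (G : SimpleGraph (Fin n)) : Prop :=
  ¬ G.Colorable r ∧ IsHFree (genBook r k) G ∧
    ∀ G' : SimpleGraph (Fin n), ¬ G'.Colorable r → IsHFree (genBook r k) G' →
      specRad G' ≤ specRad G

/-- The set `L` of vertices of small degree: `d(v) ≤ (1 - 1/r - 5√ε)n`. -/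
def Lset {n : ℕ} (r : ℕ) (ε : ℝ) (G : SimpleGraph (Fin n)) : Set (Fin n) :=
  {v | (deg G v : ℝ) ≤ (1 - 1/(r : ℝ) - 5 * Real.sqrt ε) * n}

/-- The set `W = ∪ᵢ Wᵢ` where `Wᵢ = {v ∈ Vᵢ : d_{Vᵢ}(v) ≥ 3√ε·n}`. -/
def Wset {n r : ℕ} (ε : ℝ) (G : SimpleGraph (Fin n)) (P : Fin n → Fin r) : Set (Fin n) :=
  {v | 3 * Real.sqrt ε * n ≤ (degIn G v (P ⁻¹' {P v}) : ℝ)}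

end

/-!
`Y_r(n)` arises from `T_r(n)` by deleting `⌊n/r⌋ - 1` edges at `u` and the edge `w(r-1)`, and
adding `uw` (when `n = r` the vertex `w` does not exist and the last two changes are void).
Hence `e(Y_r(n)) = e(T_r(n)) - ⌊n/r⌋ + 1`, and with `2 e(T_r(n)) = n² - Σ |Vᵢ|²` the gap between
`e(Y_r(n))` and the bound is `((2s - r)² + 8s) / (8r) ≥ 0`, where `s = n mod r`.
-/

open Finset

namespace SimpleGraph

variable {V : Type*}

lemma ncard_edgeSet_sup [Finite V] {G H : SimpleGraph V} (h : Disjoint G H) :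
    (G ⊔ H).edgeSet.ncard = G.edgeSet.ncard + H.edgeSet.ncard := by
  rw [edgeSet_sup, Set.ncard_union_eq (disjoint_edgeSet.2 h)]

lemma ncard_edgeSet_eq_degree_of_forall_mem [Fintype V] [DecidableEq V] {G : SimpleGraph V}
    [DecidableRel G.Adj] {v : V} (h : ∀ e ∈ G.edgeSet, v ∈ e) :
    G.edgeSet.ncard = G.degree v := by
  rw [← card_incidenceSet_eq_degree, ← Nat.card_eq_fintype_card, Nat.card_coe_set_eq]
  exact congrArg Set.ncard <|
    Set.Subset.antisymm (fun e he => ⟨he, h e he⟩) (G.incidenceSet_subset v)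

lemma two_mul_card_edgeFinset_turanGraph_add_sq {n r : ℕ} (hr : 0 < r) :
    2 * #(turanGraph n r).edgeFinset + n % r * (n / r + 1) ^ 2 + (r - n % r) * (n / r) ^ 2
      = n ^ 2 := by
  have hdiv := Nat.div_add_mod n r
  have hs : n % r < r := Nat.mod_lt n hr
  rw [card_edgeFinset_turanGraph]
  generalize n / r = q, n % r = s at *
  subst hdiv
  have hexact : ((r * q + s) ^ 2 - s ^ 2) * (r - 1)
      = 2 * r * (q * s * (r - 1) + r.choose 2 * q ^ 2) := by
    qify [hr, (by gcongr; omega : s ^ 2 ≤ (r * q + s) ^ 2)]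
    rw [Nat.cast_choose_two]
    ring
  rw [hexact, Nat.mul_div_cancel_left _ (by positivity)]
  qify [hr, hs.le]
  rw [Nat.cast_choose_two, Nat.cast_choose_two]
  ring

end SimpleGraph

lemma Nat.count_eq_ite (c n : ℕ) : Nat.count (· = c) n = if c < n then 1 else 0 := by
  rw [Nat.count_eq_card_filter_range, filter_eq']
  split_ifs <;> simp_all

lemma Nat.count_mod_eq_pred_and_ne {r n : ℕ} (hr : 0 < r) (hn : r ≤ n) :
    Nat.count (fun b => b % r = r - 1 ∧ b ≠ r - 1) n = n / r - 1 := by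
  have hmem : r - 1 ∈ {b ∈ range n | b % r = r - 1} := by
    simp only [mem_filter, mem_range]
    exact ⟨by omega, Nat.mod_eq_of_lt (by omega)⟩
  have hclass : #{b ∈ range n | b % r = r - 1} = n / r := by
    have h := Nat.count_modEq_card n hr (r - 1)
    have hlt : ¬ r - 1 < n % r := by have := Nat.mod_lt n hr; omega
    simp only [Nat.ModEq, Nat.mod_eq_of_lt (show r - 1 < r by omega), if_neg hlt, add_zero] at h
    rwa [← Nat.count_eq_card_filter_range]
  have herase : {b ∈ range n | b % r = r - 1 ∧ b ≠ r - 1}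
      = {b ∈ range n | b % r = r - 1}.erase (r - 1) := by
    ext b
    simp only [mem_filter, mem_erase]
    tauto
  rw [Nat.count_eq_card_filter_range, herase, card_erase_of_mem hmem, hclass]

open SimpleGraph

/-- Vertices are addressed by their labels in `ℕ`; the star is empty when `a ≥ n`, as happens
for `w = r` when `n = r`. -/
def natStar (n a : ℕ) (p : ℕ → Prop) : SimpleGraph (Fin n) :=
  fromRel fun x y => (x : ℕ) = a ∧ p y

lemma natStar_adj {n a : ℕ} {p : ℕ → Prop} (ha : ¬ p a) {x y : Fin n} :
    (natStar n a p).Adj x y ↔ (x : ℕ) = a ∧ p y ∨ (y : ℕ) = a ∧ p x := by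
  simp only [natStar, fromRel_adj]
  grind

lemma ncard_edgeSet_natStar (n a : ℕ) (p : ℕ → Prop) [DecidablePred p] (ha : ¬ p a) :
    (natStar n a p).edgeSet.ncard = if a < n then Nat.count p n else 0 := by
  classical
  split_ifs with han
  · rw [ncard_edgeSet_eq_degree_of_forall_mem (v := ⟨a, han⟩), ← card_neighborFinset_eq_degree,
      neighborFinset_eq_filter, Nat.count_eq_card_filter_range, card_filter, card_filter,
      ← Fin.sum_univ_eq_sum_range]
    · congr! 2 with y
      simp only [natStar_adj ha]
      grind
    · intro e he
      induction e using Sym2.ind with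
      | h x y =>
        rw [mem_edgeSet, natStar_adj ha] at he
        grind
  · convert Set.ncard_empty (Sym2 (Fin n))
    ext e
    induction e using Sym2.ind with
    | h x y => simp [natStar_adj ha]; omega

def yDeleted (r n : ℕ) : SimpleGraph (Fin n) :=
  natStar n 0 (fun b => b % r = r - 1 ∧ b ≠ r - 1) ⊔ natStar n r (· = r - 1)

section yGraph

variable {r n : ℕ}

lemma yGraph_sup_yDeleted (hr : 2 ≤ r) :
    yGraph r n ⊔ yDeleted r n = turanGraph n r ⊔ natStar n 0 (· = r) := by
  have h0 : 0 % r = 0 := Nat.zero_mod r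
  have h1 : r % r = 0 := Nat.mod_self r
  have h2 : (r - 1) % r = r - 1 := Nat.mod_eq_of_lt (by omega)
  ext x y
  simp only [yGraph, yDeleted, natStar, sup_adj, fromRel_adj, turanGraph_adj, ne_eq, Fin.ext_iff]
  grind

lemma disjoint_yGraph_yDeleted (hr : 2 ≤ r) : Disjoint (yGraph r n) (yDeleted r n) := by
  have h0 : 0 % r = 0 := Nat.zero_mod r
  have h1 : r % r = 0 := Nat.mod_self r
  have h2 : (r - 1) % r = r - 1 := Nat.mod_eq_of_lt (by omega)
  rw [disjoint_iff]
  ext x y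
  simp only [yGraph, yDeleted, natStar, sup_adj, inf_adj, fromRel_adj, bot_adj, ne_eq,
    Fin.ext_iff]
  grind

lemma disjoint_turanGraph_natStar : Disjoint (turanGraph n r) (natStar n 0 (· = r)) := by
  rw [disjoint_iff]
  ext x y
  simp only [natStar, turanGraph_adj, inf_adj, fromRel_adj, bot_adj, ne_eq, Fin.ext_iff]
  grind [Nat.zero_mod, Nat.mod_self]

lemma ncard_edgeSet_yDeleted (hr : 2 ≤ r) (hn : r ≤ n) :
    (yDeleted r n).edgeSet.ncard = n / r - 1 + if r < n then 1 else 0 := by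
  have hdisj : Disjoint (natStar n 0 (fun b => b % r = r - 1 ∧ b ≠ r - 1))
      (natStar n r (· = r - 1)) := by
    rw [disjoint_iff]
    ext x y
    simp only [natStar, inf_adj, fromRel_adj, bot_adj, ne_eq, Fin.ext_iff]
    grind
  rw [yDeleted, ncard_edgeSet_sup hdisj, ncard_edgeSet_natStar _ _ _ (by simp),
    if_pos (show 0 < n by omega), Nat.count_mod_eq_pred_and_ne (by omega) hn,
    ncard_edgeSet_natStar _ _ _ (by omega), Nat.count_eq_ite, if_pos (show r - 1 < n by omega)]

lemma edgeCount_yGraph_add (hr : 2 ≤ r) (hn : r ≤ n) :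
    edgeCount (yGraph r n) + n / r = #(turanGraph n r).edgeFinset + 1 := by
  have h := congrArg (fun G => G.edgeSet.ncard) (yGraph_sup_yDeleted (n := n) hr)
  rw [ncard_edgeSet_sup (disjoint_yGraph_yDeleted hr), ncard_edgeSet_yDeleted hr hn,
    ncard_edgeSet_sup disjoint_turanGraph_natStar, ← coe_edgeFinset (G := turanGraph n r),
    Set.ncard_coe_finset, ncard_edgeSet_natStar _ _ _ (by omega), if_pos (show 0 < n by omega),
    Nat.count_eq_ite] at h
  have hq : 1 ≤ n / r := (Nat.one_le_div_iff (by omega)).2 hn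
  rw [edgeCount]
  omega

end yGraph

lemma le_of_two_mul_add_sq_eq {r q s e : ℝ} (hr : 0 < r) (hs : 0 ≤ s)
    (h : 2 * e + s * (q + 1) ^ 2 + (r - s) * q ^ 2 + 2 * q = (r * q + s) ^ 2 + 2) :
    (1 - 1 / r) * (r * q + s) ^ 2 / 2 - (r * q + s) / r - r / 8 + 1 ≤ e := by
  have hgap : e - ((1 - 1 / r) * (r * q + s) ^ 2 / 2 - (r * q + s) / r - r / 8 + 1)
      = ((2 * s - r) ^ 2 + 8 * s) / (8 * r) := by
    field_simp
    linear_combination 8 * r * h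
  have : 0 ≤ ((2 * s - r) ^ 2 + 8 * s) / (8 * r) := by positivity
  linarith

/-- For integers `r ≥ 2` and `n ≥ r`,
`e(Y_r(n)) ≥ (1 - 1/r)·n²/2 - n/r - r/8 + 1`. -/
theorem stmt1 (r n : ℕ) (hr : 2 ≤ r) (hn : r ≤ n) :
    (edgeCount (yGraph r n) : ℝ) ≥
      (1 - 1/(r : ℝ)) * (n : ℝ)^2 / 2 - (n : ℝ)/(r : ℝ) - (r : ℝ)/8 + 1 := by
  have hT := two_mul_card_edgeFinset_turanGraph_add_sq (n := n) (r := r) (by omega)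
  have hY := edgeCount_yGraph_add hr hn
  have hs : n % r ≤ r := (Nat.mod_lt n (by omega)).le
  have hdiv : (n : ℝ) = r * (n / r : ℕ) + (n % r : ℕ) := by
    exact_mod_cast (Nat.div_add_mod n r).symm
  rw [hdiv, ge_iff_le]
  refine le_of_two_mul_add_sq_eq (by positivity) (by positivity) ?_
  rw [← hdiv, ← Nat.cast_sub hs]
  exact_mod_cast (by omega : 2 * edgeCount (yGraph r n) + n % r * (n / r + 1) ^ 2
    + (r - n % r) * (n / r) ^ 2 + 2 * (n / r) = n ^ 2 + 2)
end

section
/- Let r ≥ 3 and k ≥ 1 be integers and n be sufficiently large. If G attains the maximum spectral radius among all non-r-partite B_{r,k}-free graphs of order n, then G is connected. -/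
open SimpleGraph

/-!
Let `y ≥ 0` be an eigenvector of `G` for `ρ(G)` (one exists since `x ↦ |x|` does not
decrease the Rayleigh quotient of a nonnegative matrix) and `u` a vertex with `y u > 0`. If some `v` is not
reachable from `u`, then `uv` is a bridge of `G + uv`, so it lies in no triangle; as every
edge of `B_{r,k}` lies in a triangle when `r ≥ 3`, the graph `G + uv` is still
`B_{r,k}`-free, and it is still non-`r`-partite. Its Rayleigh quotient at `y + t e_v`, for
small `t > 0`, exceeds `ρ(G)`, so `ρ(G + uv) > ρ(G)`, contradicting the extremality of `G`.
-/

open Matrix SimpleGraph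

namespace Matrix

variable {ι : Type*} [Fintype ι] {A : Matrix ι ι ℝ}

noncomputable def maxEigenvalue (A : Matrix ι ι ℝ) : ℝ :=
  sSup {t : ℝ | ∃ x : ι → ℝ, x ≠ 0 ∧ A *ᵥ x = t • x}

theorem maxEigenvalue_eq_of_forall_dotProduct_mulVec_le {μ : ℝ}
    (hμ : ∃ x ≠ 0, A *ᵥ x = μ • x) (hle : ∀ x, x ⬝ᵥ A *ᵥ x ≤ μ * (x ⬝ᵥ x)) :
    maxEigenvalue A = μ := by
  refine IsGreatest.csSup_eq ⟨hμ, ?_⟩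
  rintro t ⟨x, hx, hAx⟩
  have hxx : 0 < x ⬝ᵥ x := by simpa using dotProduct_self_star_pos_iff.mpr hx
  have h := hle x
  rw [hAx, dotProduct_smul, smul_eq_mul] at h
  exact le_of_mul_le_mul_right h hxx

theorem IsHermitian.exists_eigenvalue_forall_dotProduct_mulVec_le [Nonempty ι]
    (hA : A.IsHermitian) :
    ∃ μ : ℝ, (∃ x ≠ 0, A *ᵥ x = μ • x) ∧ ∀ x, x ⬝ᵥ A *ᵥ x ≤ μ * (x ⬝ᵥ x) := by
  classical
  have hT : (toEuclideanLin A).IsSymmetric := isSymmetric_toEuclideanLin_iff.mpr hA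
  let rayleigh (x : {x : EuclideanSpace ℝ ι // x ≠ 0}) : ℝ :=
    RCLike.re (inner ℝ (toEuclideanLin A x) (x : EuclideanSpace ℝ ι)) /
      ‖(x : EuclideanSpace ℝ ι)‖ ^ 2
  refine ⟨⨆ x, rayleigh x, ?_, fun x => ?_⟩
  · obtain ⟨x, hx⟩ := hT.hasEigenvalue_iSup_of_finiteDimensional.exists_hasEigenvector
    exact ⟨x.ofLp, by simpa using hx.2, congrArg WithLp.ofLp hx.apply_eq_smul⟩
  rcases eq_or_ne x 0 with rfl | hx
  · simp
  let T := LinearMap.toContinuousLinearMap (toEuclideanLin A)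
  have hbdd : BddAbove (Set.range rayleigh) :=
    ⟨‖T‖, by rintro _ ⟨x, rfl⟩; exact (le_abs_self _).trans (T.rayleighQuotient_le_norm x)⟩
  have hpos : 0 < ‖WithLp.toLp 2 x‖ ^ 2 := pow_pos (norm_pos_iff.mpr (by simpa using hx)) 2
  have hnorm : ‖WithLp.toLp 2 x‖ ^ 2 = x ⬝ᵥ x := by
    rw [← real_inner_self_eq_norm_sq, EuclideanSpace.inner_toLp_toLp, star_trivial]
  have h : x ⬝ᵥ A *ᵥ x / ‖WithLp.toLp 2 x‖ ^ 2 ≤ ⨆ x, rayleigh x :=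
    le_ciSup hbdd ⟨WithLp.toLp 2 x, by simpa using hx⟩
  rwa [div_le_iff₀ hpos, hnorm] at h

theorem IsHermitian.exists_mulVec_eq_maxEigenvalue_smul [Nonempty ι] (hA : A.IsHermitian) :
    ∃ x ≠ 0, A *ᵥ x = maxEigenvalue A • x := by
  obtain ⟨μ, hμ, hle⟩ := hA.exists_eigenvalue_forall_dotProduct_mulVec_le
  rwa [maxEigenvalue_eq_of_forall_dotProduct_mulVec_le hμ hle]

theorem IsHermitian.dotProduct_mulVec_le_maxEigenvalue [Nonempty ι] (hA : A.IsHermitian)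
    (x : ι → ℝ) : x ⬝ᵥ A *ᵥ x ≤ maxEigenvalue A * (x ⬝ᵥ x) := by
  obtain ⟨μ, hμ, hle⟩ := hA.exists_eigenvalue_forall_dotProduct_mulVec_le
  rw [maxEigenvalue_eq_of_forall_dotProduct_mulVec_le hμ hle]
  exact hle x

theorem IsHermitian.lt_maxEigenvalue_of_lt_dotProduct_mulVec [Nonempty ι] (hA : A.IsHermitian)
    {μ : ℝ} {x : ι → ℝ} (h : μ * (x ⬝ᵥ x) < x ⬝ᵥ A *ᵥ x) : μ < maxEigenvalue A := by
  by_contra! hle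
  have hxx : 0 ≤ x ⬝ᵥ x := by simpa using dotProduct_star_self_nonneg x
  exact h.not_ge ((hA.dotProduct_mulVec_le_maxEigenvalue x).trans
    (mul_le_mul_of_nonneg_right hle hxx))

theorem IsHermitian.mulVec_eq_maxEigenvalue_smul [Nonempty ι] (hA : A.IsHermitian)
    {x : ι → ℝ} (hx : x ⬝ᵥ A *ᵥ x = maxEigenvalue A * (x ⬝ᵥ x)) :
    A *ᵥ x = maxEigenvalue A • x := by
  classical
  have hpsd : (maxEigenvalue A • 1 - A).PosSemidef := by
    refine .of_dotProduct_mulVec_nonneg ((isHermitian_one.smul (IsSelfAdjoint.all _)).sub hA)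
      fun y => ?_
    simpa [sub_mulVec, smul_mulVec, dotProduct_sub] using hA.dotProduct_mulVec_le_maxEigenvalue y
  have h := (hpsd.dotProduct_mulVec_zero_iff x).mp (by simp [sub_mulVec, smul_mulVec, hx])
  simpa [sub_mulVec, smul_mulVec, sub_eq_zero, eq_comm] using h

theorem dotProduct_mulVec_le_abs (hA : ∀ i j, 0 ≤ A i j) (x : ι → ℝ) :
    x ⬝ᵥ A *ᵥ x ≤ |x| ⬝ᵥ A *ᵥ |x| := by
  simp only [dotProduct, mulVec, Finset.mul_sum, Pi.abs_apply]
  refine Finset.sum_le_sum fun i _ => Finset.sum_le_sum fun j _ => ?_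
  calc x i * (A i j * x j) = A i j * (x i * x j) := by ring
    _ ≤ A i j * (|x i| * |x j|) := by
      rw [← abs_mul]; exact mul_le_mul_of_nonneg_left (le_abs_self _) (hA i j)
    _ = |x i| * (A i j * |x j|) := by ring

theorem IsHermitian.exists_nonneg_mulVec_eq_maxEigenvalue_smul [Nonempty ι]
    (hA : A.IsHermitian) (hA₀ : ∀ i j, 0 ≤ A i j) :
    ∃ y ≠ 0, 0 ≤ y ∧ A *ᵥ y = maxEigenvalue A • y := by
  obtain ⟨x, hx, hAx⟩ := hA.exists_mulVec_eq_maxEigenvalue_smul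
  have habs : |x| ⬝ᵥ |x| = x ⬝ᵥ x := by simp [dotProduct, abs_mul_abs_self]
  refine ⟨|x|, by simpa using hx, abs_nonneg x, hA.mulVec_eq_maxEigenvalue_smul
    (le_antisymm (hA.dotProduct_mulVec_le_maxEigenvalue _) ?_)⟩
  calc maxEigenvalue A * (|x| ⬝ᵥ |x|) = x ⬝ᵥ A *ᵥ x := by
        rw [habs, hAx, dotProduct_smul, smul_eq_mul]
    _ ≤ |x| ⬝ᵥ A *ᵥ |x| := dotProduct_mulVec_le_abs hA₀ x

theorem IsHermitian.dotProduct_mulVec_add_smul_single [DecidableEq ι] (hA : A.IsHermitian)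
    (y : ι → ℝ) (v : ι) (t : ℝ) :
    (y + t • Pi.single v 1) ⬝ᵥ A *ᵥ (y + t • Pi.single v 1) =
      y ⬝ᵥ A *ᵥ y + 2 * t * (A *ᵥ y) v + t ^ 2 * A v v := by
  have hyA : y ⬝ᵥ A.col v = (A *ᵥ y) v := by
    rw [← mulVec_single_one, dotProduct_mulVec, ← mulVec_transpose,
      (isHermitian_iff_isSymm.mp hA).eq, dotProduct_single, mul_one]
  simp only [mulVec_add, mulVec_smul, dotProduct_add, add_dotProduct, dotProduct_smul,
    smul_dotProduct, single_dotProduct, mulVec_single_one, hyA, smul_eq_mul, one_mul, col_apply]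
  ring

end Matrix

section SpectralRadius

variable {n : ℕ}

theorem specRad_eq_maxEigenvalue (G : SimpleGraph (Fin n)) :
    specRad G = (adjMat G).maxEigenvalue := rfl

theorem isHermitian_adjMat (G : SimpleGraph (Fin n)) : (adjMat G).IsHermitian := by
  ext i j
  simp only [adjMat, conjTranspose_apply, of_apply, star_trivial]
  rw [G.adj_comm]

theorem adjMat_nonneg (G : SimpleGraph (Fin n)) (i j : Fin n) : 0 ≤ adjMat G i j := by
  simp only [adjMat, of_apply]
  split_ifs <;> norm_num

@[simp]
theorem adjMat_apply_self (G : SimpleGraph (Fin n)) (i : Fin n) : adjMat G i i = 0 := by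
  simp [adjMat]

theorem adjMat_sup_edge {G : SimpleGraph (Fin n)} {u v : Fin n} (huv : u ≠ v)
    (h : ¬ G.Adj u v) :
    adjMat (G ⊔ edge u v) = adjMat G + single u v 1 + single v u 1 := by
  ext i j
  have h' : ¬ G.Adj v u := fun h' => h h'.symm
  have := G.loopless.irrefl i
  simp only [adjMat, Matrix.add_apply, of_apply, single_apply, sup_adj, edge_adj]
  split_ifs <;> grind

theorem dotProduct_adjMat_sup_edge_mulVec {G : SimpleGraph (Fin n)} {u v : Fin n}
    (huv : u ≠ v) (h : ¬ G.Adj u v) (x : Fin n → ℝ) :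
    x ⬝ᵥ adjMat (G ⊔ edge u v) *ᵥ x = x ⬝ᵥ adjMat G *ᵥ x + 2 * (x u * x v) := by
  simp only [adjMat_sup_edge huv h, add_mulVec, dotProduct_add, single_mulVec]
  simp [dotProduct, Function.update_apply, mul_ite]
  ring

theorem specRad_lt_specRad_sup_edge [Nonempty (Fin n)] {G : SimpleGraph (Fin n)}
    {y : Fin n → ℝ} (hy₀ : 0 ≤ y) (hy : adjMat G *ᵥ y = specRad G • y) {u v : Fin n}
    (hu : 0 < y u) (huv : u ≠ v) (hadj : ¬ G.Adj u v) :
    specRad G < specRad (G ⊔ edge u v) := by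
  set ρ := specRad G
  have hρ : 0 ≤ ρ := by
    have h : 0 ≤ (adjMat G *ᵥ y) u := by
      unfold mulVec dotProduct
      exact Finset.sum_nonneg fun j _ => mul_nonneg (adjMat_nonneg G u j) (hy₀ j)
    rw [hy, Pi.smul_apply, smul_eq_mul] at h
    exact nonneg_of_mul_nonneg_left h hu
  -- any `0 < t < 2 y u / ρ` works: the new edge contributes `2 y u (y v + t) > ρ t ^ 2`
  set t := y u / (ρ + 1)
  have ht : 0 < t := by positivity
  have hρt : ρ * t < y u := by
    have : (ρ + 1) * t = y u := mul_div_cancel₀ _ (by positivity)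
    linarith
  set z := y + t • Pi.single v 1
  have hzu : z u = y u := by simp [z, huv]
  have hzv : z v = y v + t := by simp [z]
  have hzAz : z ⬝ᵥ adjMat G *ᵥ z = ρ * (y ⬝ᵥ y + 2 * t * y v) := by
    rw [(isHermitian_adjMat G).dotProduct_mulVec_add_smul_single, hy, dotProduct_smul]
    simp only [Pi.smul_apply, smul_eq_mul, adjMat_apply_self]
    ring
  have hzz : z ⬝ᵥ z = y ⬝ᵥ y + 2 * t * y v + t ^ 2 := by
    have h := isHermitian_one.dotProduct_mulVec_add_smul_single y v t
    simpa only [one_mulVec, one_apply_eq, mul_one] using h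
  rw [specRad_eq_maxEigenvalue (G ⊔ edge u v)]
  refine (isHermitian_adjMat _).lt_maxEigenvalue_of_lt_dotProduct_mulVec (x := z) ?_
  rw [dotProduct_adjMat_sup_edge_mulVec huv hadj, hzAz, hzz, hzu, hzv]
  nlinarith [mul_nonneg hu.le (hy₀ v)]

theorem connected_of_specRad_sup_edge_le [Nonempty (Fin n)] {G : SimpleGraph (Fin n)}
    (h : ∀ u v, ¬ G.Reachable u v → specRad (G ⊔ edge u v) ≤ specRad G) : G.Connected := by
  obtain ⟨y, hy, hy₀, hAy⟩ :=
    (isHermitian_adjMat G).exists_nonneg_mulVec_eq_maxEigenvalue_smul (adjMat_nonneg G)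
  rw [← specRad_eq_maxEigenvalue] at hAy
  obtain ⟨u, hu⟩ : ∃ u, 0 < y u := by
    obtain ⟨u, hu⟩ := Function.ne_iff.mp hy
    exact ⟨u, (hy₀ u).lt_of_ne' hu⟩
  refine (connected_iff_exists_forall_reachable G).mpr ⟨u, fun v => ?_⟩
  by_contra huv
  exact (h u v huv).not_gt <| specRad_lt_specRad_sup_edge hy₀ hAy hu
    (fun h => huv (h ▸ .refl u)) (fun h => huv h.reachable)

end SpectralRadius

theorem IsHFree.sup_edge_of_not_reachable {α β : Type*} {H : SimpleGraph α}
    {G : SimpleGraph β} (hH : ∀ a b, H.Adj a b → ∃ c, H.Adj a c ∧ H.Adj b c)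
    (hG : IsHFree H G) {u v : β} (huv : ¬ G.Reachable u v) : IsHFree H (G ⊔ edge u v) := by
  have hold : ∀ {x w}, (G ⊔ edge u v).Adj x w → w ≠ u → w ≠ v → G.Adj x w := by
    intro x w h hwu hwv
    simpa [edge_adj, hwu, hwv] using h
  rintro ⟨f, hf⟩
  refine hG ⟨f, fun a b hab => (hf a b hab).resolve_right fun hnew => ?_⟩
  obtain ⟨c, hac, hbc⟩ := hH a b hab
  have hca : f c ≠ f a := fun h => hac.ne (f.injective h.symm)
  have hcb : f c ≠ f b := fun h => hbc.ne (f.injective h.symm)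
  rw [edge_adj] at hnew
  rcases hnew.1 with ⟨ha, hb⟩ | ⟨ha, hb⟩ <;> subst ha hb
  · exact huv ((hold (hf a c hac) hca hcb).reachable.trans
      (hold (hf b c hbc) hca hcb).reachable.symm)
  · exact huv ((hold (hf b c hbc) hcb hca).reachable.trans
      (hold (hf a c hac) hcb hca).reachable.symm)

theorem genBook_exists_common_neighbor {r k : ℕ} (hr : 3 ≤ r) (a b : Fin r ⊕ Fin k)
    (hab : (genBook r k).Adj a b) : ∃ c, (genBook r k).Adj a c ∧ (genBook r k).Adj b c := by
  obtain ⟨m, hma, hmb⟩ : ∃ m : Fin r, Sum.inl m ≠ a ∧ Sum.inl m ≠ b := by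
    rcases a with i | x <;> rcases b with j | y
    · obtain ⟨m, hi, hj⟩ := Fin.exists_ne_and_ne_of_two_lt i j (by omega)
      exact ⟨m, by simpa using hi, by simpa using hj⟩
    · obtain ⟨m, hi, -⟩ := Fin.exists_ne_and_ne_of_two_lt i i (by omega)
      exact ⟨m, by simpa using hi, Sum.inl_ne_inr⟩
    · obtain ⟨m, hj, -⟩ := Fin.exists_ne_and_ne_of_two_lt j j (by omega)
      exact ⟨m, Sum.inl_ne_inr, by simpa using hj⟩
    · simp [genBook] at hab
  exact ⟨.inl m, ⟨hma.symm, .inr rfl⟩, ⟨hmb.symm, .inr rfl⟩⟩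

theorem stmt2_general (r k : ℕ) (hr : 3 ≤ r) :
    ∃ n₀ : ℕ, ∀ n ≥ n₀, ∀ G : SimpleGraph (Fin n),
      IsExtremal r k n G → G.Connected := by
  refine ⟨1, fun n hn G ⟨hcol, hfree, hmax⟩ => ?_⟩
  have : Nonempty (Fin n) := Fin.pos_iff_nonempty.mp hn
  refine connected_of_specRad_sup_edge_le fun u v huv => hmax _ ?_ ?_
  · exact fun h => hcol (h.mono_left le_sup_left)
  · exact hfree.sup_edge_of_not_reachable (genBook_exists_common_neighbor hr) huv

/-- For `r ≥ 3`, `k ≥ 1` and sufficiently large `n`, a graph attaining the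
maximum spectral radius among all non-`r`-partite `B_{r,k}`-free graphs of order `n`
is connected. -/
theorem stmt2 (r k : ℕ) (hr : 3 ≤ r) (hk : 1 ≤ k) :
    ∃ n₀ : ℕ, ∀ n ≥ n₀, ∀ G : SimpleGraph (Fin n),
      IsExtremal r k n G → G.Connected :=
  stmt2_general r k hr
end

section
/- For sufficiently large n, the spectral radius of Y_3(n) satisfies ρ(Y_3(n)) > (2/3)n − 7/12. -/
open SimpleGraph

/-!
The spectral radius is at least every Rayleigh quotient `xᵀAx / xᵀx`. The all-ones vector only
gives `2e/n = 2n/3 - 2/3 + O(1/n)`; halving the weight of `u` raises the quotient to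
`2n/3 - 1/2 - O(1/n)`. In the encoding of `yGraph` (`u = 0`, `w = 3`, and `2` the one vertex of
`T₁` still joined to `u`), `A` is `J` minus the diagonal blocks of `T_3(n)`, minus the edges
deleted at `u` and `w`, plus `uw`, so with `s_r` the weight of the part `{i | i % 3 = r}`
`xᵀAx = (Σ x)² - Σ_r s_r² - 2 x_u Σ_{T₁ \ {2}} x - 2 x_w x_2 + 2 x_u x_w`.
For the test vector, `xᵀx = n - 3/4` and the required inequality becomes `m/4 - 7/16 > 0`,
`m/4 - 1/48 > 0` or `m/4 + 1/16 > 0` for `n = 3m`, `3m + 1`, `3m + 2`.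
-/

open Matrix Finset

theorem Matrix.mem_spectrum_of_mulVec_eq_smul {ι K : Type*} [Fintype ι] [DecidableEq ι] [Field K]
    {A : Matrix ι ι K} {x : ι → K} {t : K} (hx : x ≠ 0) (h : A *ᵥ x = t • x) :
    t ∈ spectrum K A := by
  rw [spectrum.mem_iff, ← mulVec_injective_iff_isUnit]
  refine fun hinj => hx (hinj ?_)
  simp [Algebra.algebraMap_eq_smul_one, sub_mulVec, smul_mulVec, h]

theorem Matrix.IsHermitian.dotProduct_mulVec_le {ι : Type*} [Fintype ι] [DecidableEq ι]
    {A : Matrix ι ι ℝ} (hA : A.IsHermitian) {μ : ℝ} (hμ : ∀ i, hA.eigenvalues i ≤ μ)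
    (x : ι → ℝ) : x ⬝ᵥ A *ᵥ x ≤ μ * (x ⬝ᵥ x) := by
  have hpsd : (algebraMap ℝ (Matrix ι ι ℝ) μ - A).PosSemidef := by
    refine posSemidef_iff_isHermitian_and_spectrum_nonneg.mpr ⟨?_, ?_⟩
    · rw [Algebra.algebraMap_eq_smul_one]
      exact (isHermitian_one.smul (IsSelfAdjoint.all μ)).sub hA
    · rw [← spectrum.singleton_sub_eq, hA.spectrum_real_eq_range_eigenvalues]
      rintro _ ⟨_, rfl, _, ⟨i, rfl⟩, rfl⟩
      exact sub_nonneg.mpr (hμ i)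
  simpa only [star_trivial, Algebra.algebraMap_eq_smul_one, sub_mulVec, smul_mulVec, one_mulVec,
    dotProduct_sub, dotProduct_smul, smul_eq_mul, sub_nonneg] using hpsd.dotProduct_mulVec_nonneg x

theorem adjMat_isHermitian {n : ℕ} (G : SimpleGraph (Fin n)) : (adjMat G).IsHermitian := by
  classical
  ext i j
  simp only [conjTranspose_apply, adjMat, of_apply, star_trivial]
  exact if_congr (G.adj_comm j i) rfl rfl

theorem eigenvalues_le_specRad {n : ℕ} (G : SimpleGraph (Fin n)) (i : Fin n) :
    (adjMat_isHermitian G).eigenvalues i ≤ specRad G := by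
  have hA := adjMat_isHermitian G
  refine le_csSup ((finite_real_spectrum (A := adjMat G)).subset ?_).bddAbove
    ⟨_, ?_, hA.mulVec_eigenvectorBasis i⟩
  · rintro t ⟨x, hx, hxt⟩
    exact mem_spectrum_of_mulVec_eq_smul hx hxt
  · exact fun h => hA.eigenvectorBasis.orthonormal.ne_zero i ((WithLp.ofLp_eq_zero 2).mp h)

theorem dotProduct_adjMat_mulVec_le {n : ℕ} (G : SimpleGraph (Fin n)) (x : Fin n → ℝ) :
    x ⬝ᵥ adjMat G *ᵥ x ≤ specRad G * (x ⬝ᵥ x) :=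
  (adjMat_isHermitian G).dotProduct_mulVec_le (eigenvalues_le_specRad G) x

theorem lt_specRad_of_mul_dotProduct_lt {n : ℕ} (G : SimpleGraph (Fin n)) {x : Fin n → ℝ}
    {c : ℝ} (h : c * (x ⬝ᵥ x) < x ⬝ᵥ adjMat G *ᵥ x) : c < specRad G :=
  lt_of_mul_lt_mul_right (h.trans_le (dotProduct_adjMat_mulVec_le G x))
    (Fintype.sum_nonneg fun i => mul_self_nonneg (x i))

theorem dotProduct_adjMat_mulVec_eq_sum {n : ℕ} (G : SimpleGraph (Fin n)) [DecidableRel G.Adj]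
    (x : Fin n → ℝ) :
    x ⬝ᵥ adjMat G *ᵥ x = ∑ a, ∑ b, if G.Adj a b then x a * x b else 0 := by
  simp only [dotProduct, mulVec, adjMat, of_apply, Finset.mul_sum]
  refine Fintype.sum_congr _ _ fun a => Fintype.sum_congr _ _ fun b => ?_
  split_ifs <;> ring

theorem yGraph_three_adj_iff (n : ℕ) (a b : Fin n) :
    (yGraph 3 n).Adj a b ↔
      (((a : ℕ) % 3 ≠ (b : ℕ) % 3 ∧ ¬ ((a : ℕ) = 0 ∧ (b : ℕ) % 3 = 2 ∧ (b : ℕ) ≠ 2)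
        ∧ ¬ ((b : ℕ) = 0 ∧ (a : ℕ) % 3 = 2 ∧ (a : ℕ) ≠ 2)
        ∧ ¬ ((a : ℕ) = 3 ∧ (b : ℕ) = 2) ∧ ¬ ((a : ℕ) = 2 ∧ (b : ℕ) = 3))
      ∨ ((a : ℕ) = 0 ∧ (b : ℕ) = 3) ∨ ((a : ℕ) = 3 ∧ (b : ℕ) = 0)) := by
  simp only [yGraph, SimpleGraph.fromRel_adj, ne_eq, Fin.ext_iff]
  omega

open Classical in
theorem ite_yGraph_three_adj {n : ℕ} (x : ℕ → ℝ) (a b : Fin n) :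
    (if (yGraph 3 n).Adj a b then x a * x b else 0) =
      x a * x b
      - ((if (a : ℕ) % 3 = 0 then x a else 0) * (if (b : ℕ) % 3 = 0 then x b else 0)
        + (if (a : ℕ) % 3 = 1 then x a else 0) * (if (b : ℕ) % 3 = 1 then x b else 0)
        + (if (a : ℕ) % 3 = 2 then x a else 0) * (if (b : ℕ) % 3 = 2 then x b else 0))
      - (if (a : ℕ) = 0 then x a else 0) * (if (b : ℕ) % 3 = 2 ∧ (b : ℕ) ≠ 2 then x b else 0)
      - (if (a : ℕ) % 3 = 2 ∧ (a : ℕ) ≠ 2 then x a else 0) * (if (b : ℕ) = 0 then x b else 0)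
      - (if (a : ℕ) = 2 then x a else 0) * (if (b : ℕ) = 3 then x b else 0)
      - (if (a : ℕ) = 3 then x a else 0) * (if (b : ℕ) = 2 then x b else 0)
      + (if (a : ℕ) = 0 then x a else 0) * (if (b : ℕ) = 3 then x b else 0)
      + (if (a : ℕ) = 3 then x a else 0) * (if (b : ℕ) = 0 then x b else 0) := by
  rw [if_congr (yGraph_three_adj_iff n a b) rfl rfl]
  generalize (a : ℕ) = i
  generalize (b : ℕ) = j
  have hi : i = 0 ∨ i = 2 ∨ i = 3 ∨
      (i ≠ 0 ∧ i ≠ 2 ∧ i ≠ 3 ∧ (i % 3 = 0 ∨ i % 3 = 1 ∨ i % 3 = 2)) := by omega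
  have hj : j = 0 ∨ j = 2 ∨ j = 3 ∨
      (j ≠ 0 ∧ j ≠ 2 ∧ j ≠ 3 ∧ (j % 3 = 0 ∨ j % 3 = 1 ∨ j % 3 = 2)) := by omega
  rcases hi with rfl | rfl | rfl | ⟨hi0, hi2, hi3, hi | hi | hi⟩ <;>
  rcases hj with rfl | rfl | rfl | ⟨hj0, hj2, hj3, hj | hj | hj⟩ <;>
  simp [*]

theorem Fin.sum_ite_val_eq {M : Type*} [AddCommMonoid M] {n k : ℕ} (hk : k < n) (f : ℕ → M) :
    ∑ a : Fin n, (if (a : ℕ) = k then f a else 0) = f k := by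
  rw [sum_eq_single ⟨k, hk⟩ (fun b _ hb => if_neg fun h => hb (Fin.ext h)) (by simp)]
  simp

open Classical in
theorem yGraph_three_quadForm {n : ℕ} (hn : 3 < n) (x : ℕ → ℝ) :
    ∑ a : Fin n, ∑ b : Fin n, (if (yGraph 3 n).Adj a b then x a * x b else 0) =
      (∑ i ∈ range n, x i) ^ 2 - ∑ r ∈ range 3, (∑ i ∈ range n with i % 3 = r, x i) ^ 2
        - 2 * x 0 * ∑ i ∈ range n with i % 3 = 2 ∧ i ≠ 2, x i - 2 * x 2 * x 3
        + 2 * x 0 * x 3 := by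
  simp only [ite_yGraph_three_adj, sum_sub_distrib, sum_add_distrib, ← sum_mul_sum,
    Fin.sum_ite_val_eq (f := x) (show 0 < n by omega),
    Fin.sum_ite_val_eq (f := x) (show 2 < n by omega), Fin.sum_ite_val_eq (f := x) hn]
  simp only [sum_filter, sum_range, Fin.sum_univ_three, Fin.val_zero, Fin.val_one, Fin.val_two]
  ring

theorem card_filter_range_mod_eq (n : ℕ) {m r : ℕ} (hr : r < m) :
    #{i ∈ range n | i % m = r} = n / m + if r < n % m then 1 else 0 := by
  have := Nat.count_modEq_card n (r.zero_le.trans_lt hr) r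
  simpa only [Nat.count_eq_card_filter_range, Nat.ModEq, Nat.mod_eq_of_lt hr] using this

theorem sum_ite_eq_zero_else_one (s : Finset ℕ) (c : ℝ) :
    ∑ i ∈ s, (if i = 0 then c else 1) = #s - if 0 ∈ s then 1 - c else 0 := by
  have h : ∀ i : ℕ, (if i = 0 then c else 1) = 1 - if i = 0 then 1 - c else 0 := by
    intro i; split_ifs <;> ring
  simp [h, sum_sub_distrib]

noncomputable def yTestVec (i : ℕ) : ℝ := if i = 0 then 1 / 2 else 1

theorem yTestVec_dotProduct_self {n : ℕ} (hn : 0 < n) :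
    (fun a : Fin n => yTestVec a) ⬝ᵥ (fun a : Fin n => yTestVec a) = n - 3 / 4 := by
  have h : ∀ i, yTestVec i * yTestVec i = if i = 0 then 1 / 4 else 1 := by
    intro i; unfold yTestVec; split_ifs <;> norm_num
  rw [dotProduct, ← sum_range (fun i => yTestVec i * yTestVec i)]
  simp only [h, sum_ite_eq_zero_else_one, card_range, mem_range, hn, if_true]
  norm_num

open Classical in
theorem yGraph_three_quadForm_yTestVec {n : ℕ} (hn : 3 < n) :
    ∑ a : Fin n, ∑ b : Fin n, (if (yGraph 3 n).Adj a b then yTestVec a * yTestVec b else 0) =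
      (n - 1 / 2) ^ 2 - (#{i ∈ range n | i % 3 = 0} - 1 / 2) ^ 2 - #{i ∈ range n | i % 3 = 1} ^ 2
        - #{i ∈ range n | i % 3 = 2} ^ 2 - #{i ∈ range n | i % 3 = 2} := by
  have hT : #{i ∈ range n | i % 3 = 2 ∧ i ≠ 2} + 1 = #{i ∈ range n | i % 3 = 2} := by
    rw [← filter_filter, filter_ne', card_erase_add_one]
    exact mem_filter.mpr ⟨mem_range.mpr (by omega), rfl⟩
  rw [yGraph_three_quadForm hn]
  simp only [yTestVec, one_div, sum_ite_eq_zero_else_one, card_range, mem_range,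
    show 0 < n by omega, ↓reduceIte, mem_filter, Nat.zero_mod, true_and, sum_range_succ, range_one,
    sum_singleton, zero_ne_one, sub_zero, ← hT, ne_eq, Nat.cast_add, Nat.cast_one,
    OfNat.zero_ne_ofNat, OfNat.ofNat_ne_zero, not_false_eq_true, mul_inv_cancel₀, and_true,
    and_false, one_mul, mul_one]
  ring

theorem two_thirds_sub_seven_twelfths_mul_lt {n : ℕ} (hn : 4 ≤ n) :
    (2 / 3 * n - 7 / 12) * (n - 3 / 4 : ℝ) <
      (n - 1 / 2) ^ 2 - (#{i ∈ range n | i % 3 = 0} - 1 / 2) ^ 2 - #{i ∈ range n | i % 3 = 1} ^ 2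
        - #{i ∈ range n | i % 3 = 2} ^ 2 - #{i ∈ range n | i % 3 = 2} := by
  rw [card_filter_range_mod_eq n (show 0 < 3 by norm_num),
    card_filter_range_mod_eq n (show 1 < 3 by norm_num),
    card_filter_range_mod_eq n (show 2 < 3 by norm_num)]
  obtain ⟨m, k, hk, rfl⟩ : ∃ m k, k < 3 ∧ n = 3 * m + k := ⟨n / 3, n % 3, by omega, by omega⟩
  have hm : (2 : ℝ) ≤ m + k := by exact_mod_cast (show 2 ≤ m + k by omega)
  rw [show (3 * m + k) / 3 = m by omega, show (3 * m + k) % 3 = k by omega]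
  interval_cases k <;> push_cast at hm ⊢ <;> linarith

/-- For sufficiently large `n`, `ρ(Y_3(n)) > (2/3)n - 7/12`. -/
theorem stmt3 :
    ∃ n₀ : ℕ, ∀ n ≥ n₀, specRad (yGraph 3 n) > 2/3 * (n : ℝ) - 7/12 := by
  refine ⟨4, fun n hn => lt_specRad_of_mul_dotProduct_lt (yGraph 3 n) (x := fun a => yTestVec a) ?_⟩
  classical
  rw [yTestVec_dotProduct_self (by omega), dotProduct_adjMat_mulVec_eq_sum,
    yGraph_three_quadForm_yTestVec (by omega)]
  exact two_thirds_sub_seven_twelfths_mul_lt hn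
end

section
/- Fix integers r ≥ 3, k ≥ 1, a constant ε with 0 < ε < 1/(36 r^8), and let n be sufficiently large. Let G attain the maximum spectral radius ρ among all non-r-partite B_{r,k}-free graphs of order n, let x be the positive eigenvector of the adjacency matrix of G corresponding to ρ normalized so that its maximum entry equals 1, and let L be the set of vertices v with d(v) ≤ (1 − 1/r − 5√ε)·n. Then for each v ∈ L, one has x_v < 1 − 4√ε·n/ρ. -/
open SimpleGraph

/-!
The disjoint union of the balanced complete `r`-partite graph `K_r(m)`, the graph `C₅ ∨ K_{r-2}`
and some isolated vertices is `K_{r+1}`-free (hence `B_{r,k}`-free) and not `r`-partite, and the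
indicator vector of its `K_r(m)` part is an eigenvector for `(r - 1) m`. With `r m ≈ n` this gives
`ρ > (1 - 1/r - √ε) n` for the extremal graph. On the other hand `ρ x_v = ∑_{u ~ v} x_u ≤ d(v)`
since `x ≤ 1`, so for `v ∈ L` we get `ρ x_v ≤ (1 - 1/r - √ε) n - 4√ε n < ρ - 4√ε n`.
-/

namespace SimpleGraph

variable {V W : Type*}

def join (G : SimpleGraph V) (H : SimpleGraph W) : SimpleGraph (V ⊕ W) :=
  (G ⊕g H) ⊔ completeBipartiteGraph V W

@[simp] lemma join_adj_inl {G : SimpleGraph V} {H : SimpleGraph W} {a b : V} :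
    (G.join H).Adj (.inl a) (.inl b) ↔ G.Adj a b := by
  simp [join]

@[simp] lemma join_adj_inr {G : SimpleGraph V} {H : SimpleGraph W} {a b : W} :
    (G.join H).Adj (.inr a) (.inr b) ↔ H.Adj a b := by
  simp [join]

lemma IsClique.card_le_of_cliqueFree {G : SimpleGraph V} {s : Finset V} {n : ℕ}
    (hG : G.CliqueFree (n + 1)) (hs : G.IsClique s) : s.card ≤ n := by
  by_contra! h
  obtain ⟨t, hts, ht⟩ := Finset.exists_subset_card_eq h
  exact hG t ⟨hs.subset (by simpa using hts), ht⟩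

lemma IsClique.toLeft {G : SimpleGraph (V ⊕ W)} {s : Finset (V ⊕ W)} (hs : G.IsClique s) :
    (G.comap Sum.inl).IsClique s.toLeft := fun _ ha _ hb hab ↦
  hs (Finset.mem_toLeft.1 ha) (Finset.mem_toLeft.1 hb) (Sum.inl_injective.ne hab)

lemma IsClique.toRight {G : SimpleGraph (V ⊕ W)} {s : Finset (V ⊕ W)} (hs : G.IsClique s) :
    (G.comap Sum.inr).IsClique s.toRight := fun _ ha _ hb hab ↦
  hs (Finset.mem_toRight.1 ha) (Finset.mem_toRight.1 hb) (Sum.inr_injective.ne hab)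

lemma CliqueFree.join {G : SimpleGraph V} {H : SimpleGraph W} {a b : ℕ}
    (hG : G.CliqueFree (a + 1)) (hH : H.CliqueFree (b + 1)) :
    (G.join H).CliqueFree (a + b + 1) := by
  rintro s ⟨hs, hcard⟩
  have hl : s.toLeft.card ≤ a :=
    (hs.toLeft.mono fun _ _ h ↦ by simpa using h).card_le_of_cliqueFree hG
  have hr : s.toRight.card ≤ b :=
    (hs.toRight.mono fun _ _ h ↦ by simpa using h).card_le_of_cliqueFree hH
  have := Finset.card_toLeft_add_card_toRight (u := s)
  omega

lemma CliqueFree.sum {G : SimpleGraph V} {H : SimpleGraph W} {n : ℕ}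
    (hG : G.CliqueFree n) (hH : H.CliqueFree n) : (G ⊕g H).CliqueFree n := by
  rintro s ⟨hs, rfl⟩
  have hsplit := Finset.card_toLeft_add_card_toRight (u := s)
  by_cases hl : s.toLeft = ∅
  · exact hH _ ⟨hs.toRight.mono fun _ _ h ↦ by simpa using h, by simp_all⟩
  by_cases hr : s.toRight = ∅
  · exact hG _ ⟨hs.toLeft.mono fun _ _ h ↦ by simpa using h, by simp_all⟩
  obtain ⟨a, ha⟩ := Finset.nonempty_iff_ne_empty.2 hl
  obtain ⟨b, hb⟩ := Finset.nonempty_iff_ne_empty.2 hr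
  simpa using hs (Finset.mem_toLeft.1 ha) (Finset.mem_toRight.1 hb) Sum.inl_ne_inr

lemma Colorable.of_join_top [Fintype W] {G : SimpleGraph V} {n : ℕ}
    (h : (G.join (⊤ : SimpleGraph W)).Colorable n) : G.Colorable (n - Fintype.card W) := by
  obtain ⟨C⟩ := h
  classical
  set S := Finset.univ.image (C ∘ Sum.inr)
  have hS : S.card = Fintype.card W :=
    Finset.card_image_of_injective _ fun a b hab ↦ by
      by_contra hne; exact C.valid (join_adj_inr.2 hne) hab
  have hcard : Fintype.card {c // c ∉ S} = n - Fintype.card W := by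
    rw [Fintype.card_subtype_compl, Fintype.card_coe, hS, Fintype.card_fin]
  have hfree : ∀ v, C (.inl v) ∉ S := fun v hv ↦ by
    obtain ⟨w, -, hw⟩ := Finset.mem_image.1 hv
    exact C.valid (show (G.join ⊤).Adj (.inr w) (.inl v) by simp [join]) hw
  exact hcard ▸ (Coloring.mk (fun v ↦ ⟨C (.inl v), hfree v⟩)
    fun hadj heq ↦ C.valid (join_adj_inl.2 hadj) (congrArg Subtype.val heq)).colorable

lemma cycleGraph_five_cliqueFree : (cycleGraph 5).CliqueFree 3 := by
  rintro s hs
  obtain ⟨a, b, c, hab, hac, hbc, -⟩ := is3Clique_iff.1 hs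
  rw [cycleGraph_adj] at hab hac hbc
  revert a b c
  decide

lemma cycleGraph_five_not_colorable_two : ¬ (cycleGraph 5).Colorable 2 := fun h ↦ by
  have := h.chromaticNumber_le
  rw [chromaticNumber_cycleGraph_of_odd 5 (by norm_num) (by decide)] at this
  exact absurd this (by decide)

end SimpleGraph

lemma isHFree_iff_free {α β : Type*} {H : SimpleGraph α} {G : SimpleGraph β} :
    IsHFree H G ↔ H.Free G := by
  refine not_congr ⟨fun ⟨f, hf⟩ ↦ ⟨⟨⟨f, hf _ _⟩, f.injective⟩⟩, fun ⟨f⟩ ↦ ?_⟩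
  exact ⟨f.toEmbedding, fun _ _ h ↦ f.toHom.map_adj h⟩

lemma completeGraph_isContained_genBook {r k : ℕ} (hk : 1 ≤ k) :
    completeGraph (Fin (r + 1)) ⊑ genBook r k := by
  let f : Fin r ⊕ Fin 1 → Fin r ⊕ Fin k := Sum.map id (Fin.castLE hk)
  have hf : f.Injective := Sum.map_injective.2 ⟨Function.injective_id, Fin.castLE_injective hk⟩
  have hadj : ∀ x y, x ≠ y → (genBook r k).Adj (f x) (f y) := by
    rintro (a | a) (b | b) hne
    on_goal 4 => exact absurd (congrArg Sum.inr (Subsingleton.elim a b)) hne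
    all_goals exact ⟨hf.ne hne, by simp [f]⟩
  exact ⟨⟨⟨f ∘ finSumFinEquiv.symm, fun hij ↦ hadj _ _ (finSumFinEquiv.symm.injective.ne hij)⟩,
    hf.comp finSumFinEquiv.symm.injective⟩⟩

lemma isHFree_genBook_of_cliqueFree {β : Type*} {r k : ℕ} {G : SimpleGraph β} (hk : 1 ≤ k)
    (hG : G.CliqueFree (r + 1)) : IsHFree (genBook r k) G :=
  isHFree_iff_free.2 fun h ↦ ((completeGraph_isContained_genBook hk).trans h).not_cliqueFree hG

section Spectral

open Matrix

variable {n : ℕ} (G : SimpleGraph (Fin n))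

open Classical in
lemma adjMat_eq_adjMatrix : adjMat G = G.adjMatrix ℝ := by
  ext i j
  simp [adjMat, SimpleGraph.adjMatrix_apply]

lemma deg_eq_degree [DecidableRel G.Adj] (v : Fin n) : deg G v = G.degree v := by
  rw [deg, ← SimpleGraph.card_neighborFinset_eq_degree, ← Set.ncard_coe_finset,
    SimpleGraph.coe_neighborFinset]

lemma le_card_of_adjMat_mulVec_eq {t : ℝ} {x : Fin n → ℝ} (hx : x ≠ 0)
    (h : adjMat G *ᵥ x = t • x) : t ≤ n := by
  have heig : Module.End.HasEigenvalue (toLin' (adjMat G)) t :=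
    Module.End.hasEigenvalue_of_hasEigenvector
      ⟨Module.End.mem_eigenspace_iff.2 (by rwa [toLin'_apply]), hx⟩
  obtain ⟨k, hk⟩ := eigenvalue_mem_ball heig
  rw [Metric.mem_closedBall, Real.dist_eq] at hk
  calc t ≤ adjMat G k k + ∑ j ∈ Finset.univ.erase k, ‖adjMat G k j‖ := by
        linarith [le_abs_self (t - adjMat G k k)]
    _ ≤ 0 + ∑ _j ∈ Finset.univ.erase k, (1 : ℝ) := by
        gcongr with j
        · simp [adjMat]
        · simp only [adjMat, of_apply]; split_ifs <;> simp
    _ ≤ n := by simp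

lemma le_specRad {t : ℝ} {x : Fin n → ℝ} (hx : x ≠ 0) (h : adjMat G *ᵥ x = t • x) :
    t ≤ specRad G :=
  le_csSup ⟨n, fun _ ⟨_, hy, hty⟩ ↦ le_card_of_adjMat_mulVec_eq G hy hty⟩ ⟨x, hx, h⟩

lemma adjMat_mulVec_le_deg {x : Fin n → ℝ} (hx : ∀ u, x u ≤ 1) (v : Fin n) :
    (adjMat G *ᵥ x) v ≤ deg G v := by
  classical
  rw [adjMat_eq_adjMatrix, SimpleGraph.adjMatrix_mulVec_apply, deg_eq_degree,
    ← SimpleGraph.card_neighborFinset_eq_degree]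
  simpa using Finset.sum_le_sum fun u (_ : u ∈ G.neighborFinset v) ↦ hx u

open Classical in
lemma adjMat_comap_mulVec {V : Type*} [Fintype V] (H : SimpleGraph V) (e : Fin n ≃ V)
    (y : V → ℝ) : adjMat (H.comap e) *ᵥ (y ∘ e) = (H.adjMatrix ℝ *ᵥ y) ∘ e := by
  have : adjMat (H.comap e) = (H.adjMatrix ℝ).submatrix e e := by
    ext i j; simp [adjMat, SimpleGraph.adjMatrix_apply]
  rw [this, submatrix_mulVec_equiv, Function.comp_assoc, e.self_comp_symm, Function.comp_id]

end Spectral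

namespace SimpleGraph

open Matrix

open Classical in
lemma adjMatrix_sum_mulVec_elim_one_zero {V W : Type*} [Fintype V] [Fintype W]
    {G : SimpleGraph V} (H : SimpleGraph W) {d : ℕ} (hG : G.IsRegularOfDegree d) :
    (G ⊕g H).adjMatrix ℝ *ᵥ Sum.elim (1 : V → ℝ) 0 = (d : ℝ) • Sum.elim (1 : V → ℝ) 0 := by
  ext (v | w)
  · simpa [mulVec, dotProduct, Fintype.sum_sum_type, adjMatrix_apply] using
      adjMatrix_mulVec_const_apply_of_regular (α := ℝ) (a := 1) hG (v := v)
  · simp [mulVec, dotProduct, Fintype.sum_sum_type, adjMatrix_apply]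

def cycleFiveJoinClique (r : ℕ) : SimpleGraph (Fin 5 ⊕ Fin (r - 2)) := (cycleGraph 5).join ⊤

variable {r : ℕ}

lemma cycleFiveJoinClique_cliqueFree (hr : 2 ≤ r) :
    (cycleFiveJoinClique r).CliqueFree (r + 1) := by
  have := cycleGraph_five_cliqueFree.join
    (cliqueFree_of_card_lt (G := (⊤ : SimpleGraph (Fin (r - 2)))) (n := r - 2 + 1) (by simp))
  rwa [show 2 + (r - 2) + 1 = r + 1 by omega] at this

lemma cycleFiveJoinClique_not_colorable (hr : 2 ≤ r) : ¬ (cycleFiveJoinClique r).Colorable r :=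
  fun h ↦ cycleGraph_five_not_colorable_two <| by
    simpa [show r - (r - 2) = 2 by omega] using h.of_join_top

def witnessGraph (r m l : ℕ) : SimpleGraph ((Fin r × Fin m) ⊕ ((Fin 5 ⊕ Fin (r - 2)) ⊕ Fin l)) :=
  completeEquipartiteGraph r m ⊕g (cycleFiveJoinClique r ⊕g ⊥)

variable {m l : ℕ}

lemma witnessGraph_not_colorable (hr : 2 ≤ r) : ¬ (witnessGraph r m l).Colorable r :=
  fun h ↦ cycleFiveJoinClique_not_colorable hr h.of_sum_right.of_sum_left

lemma witnessGraph_cliqueFree (hr : 2 ≤ r) : (witnessGraph r m l).CliqueFree (r + 1) :=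
  ((turanGraph_cliqueFree (by omega)).comap completeEquipartiteGraph.turanGraph.isContained).sum
    ((cycleFiveJoinClique_cliqueFree hr).sum (cliqueFree_bot (by omega)))

open Classical in
lemma witnessGraph_adjMatrix_mulVec :
    (witnessGraph r m l).adjMatrix ℝ *ᵥ Sum.elim (1 : Fin r × Fin m → ℝ) 0 =
      (((r - 1) * m : ℕ) : ℝ) • Sum.elim (1 : Fin r × Fin m → ℝ) 0 :=
  adjMatrix_sum_mulVec_elim_one_zero _ fun v ↦ by convert degree_completeEquipartiteGraph v

end SimpleGraph

open SimpleGraph in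
lemma le_specRad_of_isExtremal {r k n m : ℕ} (hr : 2 ≤ r) (hk : 1 ≤ k) (hm : 0 < m)
    (hn : r * m + (r + 3) ≤ n) {G : SimpleGraph (Fin n)} (hG : IsExtremal r k n G) :
    (((r - 1) * m : ℕ) : ℝ) ≤ specRad G := by
  classical
  set H := witnessGraph r m (n - (r * m + (r + 3)))
  let e : Fin n ≃ _ := Fintype.equivOfCardEq (β := (Fin r × Fin m) ⊕ ((Fin 5 ⊕ Fin (r - 2)) ⊕
    Fin (n - (r * m + (r + 3))))) (by simp; omega)
  have hy : Sum.elim (1 : Fin r × Fin m → ℝ) 0 ∘ e ≠ 0 := fun h ↦ by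
    simpa using congrFun h (e.symm (.inl (⟨0, by omega⟩, ⟨0, hm⟩)))
  calc _ ≤ specRad (H.comap e) :=
        le_specRad _ hy (by rw [adjMat_comap_mulVec, witnessGraph_adjMatrix_mulVec]; rfl)
    _ ≤ specRad G := hG.2.2 _
        (fun h ↦ witnessGraph_not_colorable hr (h.of_hom (Iso.comap e H).symm.toHom))
        (isHFree_genBook_of_cliqueFree hk
          ((witnessGraph_cliqueFree hr).comap (Iso.comap e H).isContained))

lemma exists_turanPart_size {r : ℕ} (hr : 0 < r) {δ : ℝ} (hδ : 0 < δ) :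
    ∃ n₀ : ℕ, ∀ n ≥ n₀, ∃ m : ℕ, 0 < m ∧ r * m + (r + 3) ≤ n ∧
      (1 - 1 / (r : ℝ) - δ) * n < (((r - 1) * m : ℕ) : ℝ) := by
  refine ⟨⌈(2 * r + 3) / δ⌉₊ + 2 * r + 3, fun n hn ↦ ⟨(n - (r + 3)) / r, ?_, ?_, ?_⟩⟩
  · exact Nat.div_pos (by omega) hr
  · have := Nat.div_mul_le_self (n - (r + 3)) r
    rw [mul_comm]; omega
  set m := (n - (r + 3)) / r
  have hnm : (n : ℝ) - (2 * r + 2) ≤ r * m := by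
    have : n - (r + 3) < r * m + r := by
      simpa [mul_comm] using Nat.lt_div_mul_add (a := n - (r + 3)) hr
    have : n ≤ r * m + (2 * r + 2) := by omega
    have := (Nat.cast_le (α := ℝ)).2 this
    push_cast at this
    linarith
  have hδn : 2 * (r : ℝ) + 3 ≤ δ * n := by
    have h1 := Nat.le_ceil ((2 * r + 3) / δ)
    have h2 : (⌈(2 * r + 3) / δ⌉₊ : ℝ) ≤ n := Nat.cast_le.2 (by omega)
    rw [div_le_iff₀ hδ] at h1
    nlinarith
  have hR : (1 : ℝ) ≤ r := by exact_mod_cast hr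
  have hq0 : 0 ≤ 1 - 1 / (r : ℝ) := by rw [sub_nonneg, div_le_one (by linarith)]; exact hR
  have hq1 : 1 - 1 / (r : ℝ) ≤ 1 := by linarith [(by positivity : 0 < 1 / (r : ℝ))]
  calc (1 - 1 / (r : ℝ) - δ) * n < (1 - 1 / r) * (n - (2 * r + 2)) := by
        nlinarith [mul_le_mul_of_nonneg_right hq1 (by positivity : (0 : ℝ) ≤ 2 * r + 2)]
    _ ≤ (1 - 1 / r) * (r * m) := by gcongr
    _ = (((r - 1) * m : ℕ) : ℝ) := by
        rw [Nat.cast_mul, Nat.cast_sub (by omega)]; field_simp; ring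

theorem stmt11_general (r k : ℕ) (hr : 3 ≤ r) (hk : 1 ≤ k) (ε : ℝ) (hε0 : 0 < ε) :
    ∃ n₀ : ℕ, ∀ n ≥ n₀, ∀ G : SimpleGraph (Fin n),
      IsExtremal r k n G →
        ∀ x : Fin n → ℝ, (∀ v, 0 < x v) →
          (adjMat G).mulVec x = specRad G • x →
          (∀ v, x v ≤ 1) → (∃ v, x v = 1) →
          ∀ v ∈ Lset r ε G, x v < 1 - 4 * Real.sqrt ε * (n : ℝ) / specRad G := by
  obtain ⟨n₀, hn₀⟩ := exists_turanPart_size (by omega : 0 < r) (Real.sqrt_pos.2 hε0)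
  refine ⟨n₀, fun n hn G hG x _ hx hx1 _ v (hv : (deg G v : ℝ) ≤ _) ↦ ?_⟩
  obtain ⟨m, hm, hmn, hlt⟩ := hn₀ n hn
  have hρ := le_specRad_of_isExtremal (by omega) hk hm hmn hG
  have hρ0 : 0 < specRad G := (Nat.cast_pos.2 (Nat.mul_pos (by omega) hm)).trans_le hρ
  have hxv : specRad G * x v ≤ deg G v := by
    simpa [hx] using adjMat_mulVec_le_deg G hx1 v
  have key : specRad G * x v < specRad G - 4 * Real.sqrt ε * n := by linarith
  calc x v = specRad G * x v / specRad G := by field_simp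
    _ < (specRad G - 4 * Real.sqrt ε * n) / specRad G := by gcongr
    _ = 1 - 4 * Real.sqrt ε * n / specRad G := by field_simp

/-- if `x` is the positive Perron eigenvector of the spectral-extremal
graph `G`, normalized with maximum entry `1`, then every low-degree vertex `v ∈ L`
satisfies `x_v < 1 - 4√ε·n/ρ`. -/
theorem stmt11 (r k : ℕ) (hr : 3 ≤ r) (hk : 1 ≤ k) (ε : ℝ) (hε0 : 0 < ε)
    (hε1 : ε < 1/(36 * (r : ℝ)^8)) :
    ∃ n₀ : ℕ, ∀ n ≥ n₀, ∀ G : SimpleGraph (Fin n),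
      IsExtremal r k n G →
        ∀ x : Fin n → ℝ, (∀ v, 0 < x v) →
          (adjMat G).mulVec x = specRad G • x →
          (∀ v, x v ≤ 1) → (∃ v, x v = 1) →
          ∀ v ∈ Lset r ε G, x v < 1 - 4 * Real.sqrt ε * (n : ℝ) / specRad G :=
  stmt11_general r k hr hk ε hε0
end
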